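/- Single-step expectation bound: suppose s,t are nodes at weighted distance ℓ, and a random partition places s,t in different parts with probability at most min{1, α·ℓ/ρⁱ}, in which case s and t are each moved to centers at distance at most ρⁱ (costing a new demand of ℓ1-mass 2 with OPT at most ℓ + 2ρⁱ), and otherwise the demand cancels. Define Φ_{i−1} = ℓ + 2ρ^{i−1} and the post-step potential Φ_i = OPT(d_i) + ‖d_i‖₁·ρⁱ. Then E[max{Φ_i, Φ_{i−1}}] ≤ 6α·Φ_{i−1}. -/

import Mathlib

open MeasureTheory

/-! Pointwise, `max Φᵢ Φᵢ₋₁ ≤ Φᵢ₋₁ + 𝟙_A · (ℓ + 4ρⁱ)`, so with `p = μ A` the expectation is at most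
`Φᵢ₋₁ + p ℓ + 4 p ρⁱ ≤ Φᵢ₋₁ + ℓ + 4 α ℓ ≤ 6 α Φᵢ₋₁`, using `p ≤ 1`, `p ρⁱ ≤ α ℓ` and `ℓ ≤ Φᵢ₋₁`. -/

theorem integral_max_le_add_measureReal_mul {Ω : Type*} [MeasurableSpace Ω] (μ : Measure Ω)
    [IsProbabilityMeasure μ] {A : Set Ω} (hA : MeasurableSet A) {f : Ω → ℝ} {c L : ℝ}
    (hc : 0 ≤ c) (hL : 0 ≤ L) (hin : ∀ ω ∈ A, f ω ≤ L) (hout : ∀ ω ∉ A, f ω ≤ c) :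
    ∫ ω, max (f ω) c ∂μ ≤ c + μ.real A * L := by
  have hdom : ∀ ω, max (f ω) c ≤ c + A.indicator (fun _ => L) ω := by
    intro ω
    by_cases hω : ω ∈ A
    · rw [Set.indicator_of_mem hω]
      exact max_le (by linarith [hin ω hω]) (by linarith)
    · rw [Set.indicator_of_notMem hω, add_zero]
      exact max_le (hout ω hω) le_rfl
  have hint : Integrable (fun ω => c + A.indicator (fun _ => L) ω) μ :=
    (integrable_const c).add ((integrable_const L).indicator hA)
  calc ∫ ω, max (f ω) c ∂μ ≤ ∫ ω, c + A.indicator (fun _ => L) ω ∂μ :=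
        integral_mono_of_nonneg (.of_forall fun ω => hc.trans (le_max_right _ _)) hint
          (.of_forall hdom)
    _ = c + μ.real A * L := by
        rw [integral_add (integrable_const c) ((integrable_const L).indicator hA),
          integral_const, integral_indicator_const L hA, probReal_univ, one_smul, smul_eq_mul]

theorem stmt6_general {Ω : Type*} [MeasurableSpace Ω] (μ : Measure Ω) [IsProbabilityMeasure μ]
    (α ρ ℓ : ℝ) (i : ℕ) (hα : 1 ≤ α) (hρ : 1 ≤ ρ) (hℓ : 0 ≤ ℓ)
    (A : Set Ω) (hA : MeasurableSet A)
    (Φi : Ω → ℝ)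
    (hp : (μ A).toReal ≤ min 1 (α * ℓ / ρ ^ i))
    (hin : ∀ ω ∈ A, Φi ω ≤ ℓ + 4 * ρ ^ i)
    (hout : ∀ ω ∉ A, Φi ω = 0) :
    (∫ ω, max (Φi ω) (ℓ + 2 * ρ ^ (i - 1)) ∂μ)
      ≤ 6 * α * (ℓ + 2 * ρ ^ (i - 1)) := by
  have hρi : 0 < ρ ^ i := by positivity
  have hρi' : 0 ≤ ρ ^ (i - 1) := by positivity
  have hp0 : 0 ≤ μ.real A := measureReal_nonneg
  have hp1 : μ.real A ≤ 1 := hp.trans (min_le_left _ _)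
  have hpρ : μ.real A * ρ ^ i ≤ α * ℓ := (le_div_iff₀ hρi).1 (hp.trans (min_le_right _ _))
  calc ∫ ω, max (Φi ω) (ℓ + 2 * ρ ^ (i - 1)) ∂μ
      ≤ ℓ + 2 * ρ ^ (i - 1) + μ.real A * (ℓ + 4 * ρ ^ i) :=
        integral_max_le_add_measureReal_mul μ hA (by positivity) (by positivity) hin
          fun ω hω => (hout ω hω).trans_le (by positivity)
    _ ≤ 6 * α * (ℓ + 2 * ρ ^ (i - 1)) := by nlinarith

/-- Single-step expectation bound for the LDD routing potential:
if `s,t` are at distance `ℓ` and are separated with probability at most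
`min{1, α·ℓ/ρⁱ}` (in which case `Φᵢ ≤ ℓ + 4ρⁱ`), and otherwise the demand cancels
(`Φᵢ = 0`), then `E[max{Φᵢ, Φᵢ₋₁}] ≤ 6α·Φᵢ₋₁` where `Φᵢ₋₁ = ℓ + 2ρ^{i−1}`. -/
theorem stmt6 {Ω : Type*} [MeasurableSpace Ω] (μ : Measure Ω) [IsProbabilityMeasure μ]
    (α ρ ℓ : ℝ) (i : ℕ) (hα : 1 ≤ α) (hρ : 1 ≤ ρ) (hℓ : 0 ≤ ℓ) (hi : 1 ≤ i)
    (A : Set Ω) (hA : MeasurableSet A)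
    (Φi : Ω → ℝ) (hmeas : Measurable Φi)
    (hp : (μ A).toReal ≤ min 1 (α * ℓ / ρ ^ i))
    (hin : ∀ ω ∈ A, Φi ω ≤ ℓ + 4 * ρ ^ i)
    (hout : ∀ ω ∉ A, Φi ω = 0) :
    (∫ ω, max (Φi ω) (ℓ + 2 * ρ ^ (i - 1)) ∂μ)
      ≤ 6 * α * (ℓ + 2 * ρ ^ (i - 1)) :=
  stmt6_general μ α ρ ℓ i hα hρ hℓ A hA Φi hp hin hout
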